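/- arXiv:1311.5572 — 5 statements merged into one kernel-verified Lean document; each statement's English description precedes it below -/
import Mathlib

section
/- Let Tr be a DetLinTT^V and t ∈ dom(Tr). Then there exists an injective map φ from the set of value-carrying positions of Tr(t) to pos(t) such that val(Tr(t), w) = val(t, φ(w)) for every value-carrying position w of Tr(t) (data values are transferred from input to output without duplication). -/
/-! Data trees over a ranked alphabet: each node is labeled by a symbol
(respecting arities) and optionally carries a data value in ℕ. -/

inductive DTree (S : Type) (ar : S → ℕ) : Type
  | node (σ : S) (val : Option ℕ) (children : Fin (ar σ) → DTree S ar) : DTree S ar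

namespace DTree

variable {S : Type} {ar : S → ℕ}

/-- Root label. -/
def label : DTree S ar → S
  | node σ _ _ => σ

/-- Root data value (if any). -/
def rootVal : DTree S ar → Option ℕ
  | node _ v _ => v

/-- Subtree at a position (a position is a list of child indices). -/
def subtreeAt : DTree S ar → List ℕ → Option (DTree S ar)
  | t, [] => some t
  | node σ _ c, i :: p => if h : i < ar σ then (c ⟨i, h⟩).subtreeAt p else none

/-- The set of positions of a data tree. -/
def pos (t : DTree S ar) : Set (List ℕ) := {v | (t.subtreeAt v).isSome}

/-- The data value carried at position `v` (if the position exists and carries one). -/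
def valAt (t : DTree S ar) (v : List ℕ) : Option ℕ :=
  (t.subtreeAt v).bind rootVal

/-- `t⁻`: erase all data values. A (plain) tree is a data tree of the form `t.erase`. -/
def erase : DTree S ar → DTree S ar
  | node σ _ c => node σ none fun i => (c i).erase

/-- A data tree is proper if every node carries a data value. -/
inductive Proper : DTree S ar → Prop
  | node (σ : S) (ν : ℕ) (c : Fin (ar σ) → DTree S ar) :
      (∀ i, Proper (c i)) → Proper (DTree.node σ (some ν) c)

/-- `t^(v←ν)`: set the data value at position `v` to `ν`. -/
def setVal : DTree S ar → List ℕ → ℕ → DTree S ar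
  | node σ _w c, [], ν => node σ (some ν) c
  | node σ w c, i :: p, ν =>
      node σ w fun k => if (k : ℕ) = i then (c k).setVal p ν else c k

end DTree

/-! Tree automata. -/

/-- A (top-down) tree automaton over the ranked alphabet `(S, ar)` with state set `P`:
initial states and transition rules `p → σ(p₁,…,p_n)` (with `n = ar σ`). -/
structure TA (S : Type) (ar : S → ℕ) (P : Type) where
  init : Set P
  rules : P → (σ : S) → (Fin (ar σ) → P) → Prop

namespace TA

variable {S : Type} {ar : S → ℕ} {P : Type}

/-- `m` is an accepting run of `A` on `t`: the root gets an initial state and every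
position is consistent with some transition rule.  (Runs only look at labels, so a
run on `t` is the same thing as a run on `t⁻`.) -/
def IsRun (A : TA S ar P) (t : DTree S ar) (m : List ℕ → P) : Prop :=
  m [] ∈ A.init ∧
    ∀ v s, t.subtreeAt v = some s →
      A.rules (m v) s.label fun i => m (v ++ [(i : ℕ)])

/-- The language of a tree automaton. -/
def Lang (A : TA S ar P) : Set (DTree S ar) := {t | ∃ m, A.IsRun t m}

/-- `A` is reduced: every state is assigned to some position by some accepting run
(hence there are no useless states, and so no useless rules). -/
def Reduced (A : TA S ar P) : Prop :=
  ∀ p : P, ∃ (t : DTree S ar) (m : List ℕ → P) (v : List ℕ),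
    A.IsRun t m ∧ v ∈ t.pos ∧ m v = p

end TA

/-! Run-based n-ary queries. -/

/-- A run-based `n`-ary query `(A, S)`: a tree automaton together with a set of
`n`-tuples of states. -/
structure NRQ (S : Type) (ar : S → ℕ) (P : Type) (n : ℕ) where
  aut : TA S ar P
  sel : Set (Fin n → P)

namespace NRQ

variable {S : Type} {ar : S → ℕ} {P : Type} {n : ℕ}

/-- `Q(t)`: the set of position tuples selected by some accepting run on `t⁻`. -/
def ans (Q : NRQ S ar P n) (t : DTree S ar) : Set (Fin n → List ℕ) :=
  {vs | (∀ i, vs i ∈ t.pos) ∧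
    ∃ m, Q.aut.IsRun t.erase m ∧ (fun i => m (vs i)) ∈ Q.sel}

/-- `val(Q(t))`: the corresponding tuples of data values. -/
def valAns (Q : NRQ S ar P n) (t : DTree S ar) : Set (Fin n → ℕ) :=
  {ds | ∃ vs ∈ Q.ans t, ∀ i, t.valAt (vs i) = some (ds i)}

end NRQ

/-! Contexts over an output alphabet, with variables `x₁,…,x_n`. -/

inductive Ctx (D : Type) (ar : D → ℕ) (n : ℕ) : Type
  | var (i : Fin n)
  | node (d : D) (children : Fin (ar d) → Ctx D ar n)

namespace Ctx

variable {D : Type} {ar : D → ℕ} {n : ℕ}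

/-- Variable `i` occurs in the context. -/
def HasVar : Ctx D ar n → Fin n → Prop
  | var j, i => j = i
  | node _ c, i => ∃ k, (c k).HasVar i

/-- Variable `i` occurs at position `v` of the context. -/
def VarAt : Ctx D ar n → Fin n → List ℕ → Prop
  | var j, i, v => j = i ∧ v = []
  | node _ _, _, [] => False
  | node d c, i, k :: p => ∃ h : k < ar d, (c ⟨k, h⟩).VarAt i p

/-- Position `v` of the context is labeled by an output symbol. -/
def SymAt : Ctx D ar n → List ℕ → Prop
  | var _, _ => False
  | node _ _, [] => True
  | node d c, k :: p => ∃ h : k < ar d, (c ⟨k, h⟩).SymAt p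

/-- The context is linear: each variable occurs at most once. -/
def Linear (C : Ctx D ar n) : Prop :=
  ∀ i v w, C.VarAt i v → C.VarAt i w → v = w

/-- Instantiate a context: substitute `sub i` for variable `xᵢ`, and place the data
value `ν` at the (optional) designated position `j`; all other output nodes carry
no value. -/
def inst : Ctx D ar n → (Fin n → DTree D ar) → Option (List ℕ) → ℕ → DTree D ar
  | var i, sub, _, _ => sub i
  | node d c, sub, j, ν =>
      DTree.node d (if j = some [] then some ν else none) fun k =>
        (c k).inst sub
          (match j with
            | some (m :: p) => if m = (k : ℕ) then some p else none
            | _ => none) ν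

end Ctx

/-! Linear top-down data tree transducers (LinTT^V). -/

/-- A transduction rule `p(σ^(z)(x₁,…,x_n)) → C^(j←z)[p₁(x₁),…,p_n(x_n)]`
(the value-position designation `vpos` is optional). -/
structure TRule (S : Type) (arS : S → ℕ) (D : Type) (arD : D → ℕ) (P : Type) where
  st : P
  sym : S
  chst : Fin (arS sym) → P
  rhs : Ctx D arD (arS sym)
  vpos : Option (List ℕ)

/-- Well-formedness: the right-hand side is linear and the designated value
position (if any) is an output-symbol-labeled position of the context. -/
def TRule.WF {S D P : Type} {arS : S → ℕ} {arD : D → ℕ} (r : TRule S arS D arD P) : Prop :=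
  r.rhs.Linear ∧ ∀ v ∈ r.vpos, r.rhs.SymAt v

/-- A linear top-down data tree transducer. -/
structure LinTTV (S : Type) (arS : S → ℕ) (D : Type) (arD : D → ℕ) (P : Type) where
  init : Set P
  rules : Set (TRule S arS D arD P)
  wf : ∀ r ∈ rules, r.WF

namespace LinTTV

variable {S D P : Type} {arS : S → ℕ} {arD : D → ℕ}

/-- `Deriv Tr p t t'`: starting in state `p`, the transducer rewrites `p(t)` to the
output data tree `t'`.  A rule applies to `p(σ^(ν)(t₁,…,t_n))` and produces its
right-hand side context instantiated at value `ν`, where each variable `xᵢ`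
occurring in the context is replaced by an output of the derivation from
`pᵢ(tᵢ)` (subtrees at non-occurring variables are deleted). -/
inductive Deriv (Tr : LinTTV S arS D arD P) : P → DTree S arS → DTree D arD → Prop
  | step (r : TRule S arS D arD P) (hr : r ∈ Tr.rules) (ν : ℕ)
      (ts : Fin (arS r.sym) → DTree S arS) (sub : Fin (arS r.sym) → DTree D arD)
      (h : ∀ i, r.rhs.HasVar i → Deriv Tr (r.chst i) (ts i) (sub i)) :
      Deriv Tr r.st (DTree.node r.sym (some ν) ts) (r.rhs.inst sub r.vpos ν)

/-- `rel Tr t t'` means `(t, t') ∈ rel(Tr)`: `t` is a proper input data tree and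
`p_I(t) ⇒* t'` for some initial state `p_I`. -/
def rel (Tr : LinTTV S arS D arD P) (t : DTree S arS) (t' : DTree D arD) : Prop :=
  t.Proper ∧ ∃ p ∈ Tr.init, Tr.Deriv p t t'

/-- The domain of the transducer. -/
def dom (Tr : LinTTV S arS D arD P) : Set (DTree S arS) := {t | ∃ t', Tr.rel t t'}

/-- The range of the transducer. -/
def rng (Tr : LinTTV S arS D arD P) : Set (DTree D arD) := {t' | ∃ t, Tr.rel t t'}

/-- `Tr⁻¹(t_d)`. -/
def preim (Tr : LinTTV S arS D arD P) (td : DTree D arD) : Set (DTree S arS) :=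
  {t | Tr.rel t td}

/-- Deterministic: exactly one initial state, and for each state and input symbol
at most one rule. -/
def Deterministic (Tr : LinTTV S arS D arD P) : Prop :=
  (∃ p, Tr.init = {p}) ∧
    ∀ r₁ ∈ Tr.rules, ∀ r₂ ∈ Tr.rules, r₁.st = r₂.st → r₁.sym = r₂.sym → r₁ = r₂

end LinTTV

/-! Query preservation, stated for an arbitrary transformation relation
`R : input data trees → output data trees → Prop`. -/

/-- `R` (strongly) preserves `Q`: there is an `n`-ary query `Q'` over the output
alphabet (a run-based query with a finite state set whose selected tuples consist of
pairwise distinct states) with `val(Q'(Tr(t))) = val(Q(t))` for all `t ∈ dom`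
(Equation (1)). -/
def StronglyPreservesRel {S D PQ : Type} {arS : S → ℕ} {arD : D → ℕ} {n : ℕ}
    (R : DTree S arS → DTree D arD → Prop) (Q : NRQ S arS PQ n) : Prop :=
  ∃ (P' : Type) (_ : Fintype P') (Q' : NRQ D arD P' n),
    (∀ s ∈ Q'.sel, Function.Injective s) ∧
      ∀ t t', R t t' → Q'.valAns t' = Q.valAns t

/-- `R` weakly preserves `Q`: there is an `n`-ary query `Q'` over the output
alphabet such that for every `t_d` in the range,
`val(Q'(t_d)) = ⋃_{t ∈ R⁻¹(t_d)} val(Q(t))` (Equation (2)). -/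
def WeaklyPreservesRel {S D PQ : Type} {arS : S → ℕ} {arD : D → ℕ} {n : ℕ}
    (R : DTree S arS → DTree D arD → Prop) (Q : NRQ S arS PQ n) : Prop :=
  ∃ (P' : Type) (_ : Fintype P') (Q' : NRQ D arD P' n),
    (∀ s ∈ Q'.sel, Function.Injective s) ∧
      ∀ td, (∃ t, R t td) → Q'.valAns td = ⋃ t ∈ {t | R t td}, Q.valAns t

/-! By induction on the derivation, every value of the output is traced back to an input
position. In a rule step the output is `C` instantiated with value `ν` and the outputs of
the children: a value inside the subtree substituted for `xᵢ` comes from position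
`i :: v` of the input, where `v` is its origin in the `i`-th child, and the single value the
rule itself places comes from the root. Since `C` is linear, each `xᵢ` occurs at one position
only, so distinct output positions get distinct origins. -/

namespace DTree

variable {S : Type} {ar : S → ℕ}

theorem mem_pos_of_valAt_isSome {t : DTree S ar} {v : List ℕ} (h : (t.valAt v).isSome) :
    v ∈ t.pos := by
  unfold valAt at h
  unfold pos
  cases hs : t.subtreeAt v <;> simp_all

@[simp]
theorem valAt_node_nil (σ : S) (a : Option ℕ) (c : Fin (ar σ) → DTree S ar) :
    (node σ a c).valAt [] = a := rfl

@[simp]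
theorem valAt_node_cons (σ : S) (a : Option ℕ) (c : Fin (ar σ) → DTree S ar) (k : ℕ)
    (v : List ℕ) :
    (node σ a c).valAt (k :: v) = if h : k < ar σ then (c ⟨k, h⟩).valAt v else none := by
  by_cases h : k < ar σ <;> simp [valAt, subtreeAt, h]

end DTree

def IsValueEmbedding {S D : Type} {arS : S → ℕ} {arD : D → ℕ} (φ : List ℕ → List ℕ)
    (t' : DTree D arD) (t : DTree S arS) : Prop :=
  Set.InjOn φ {w | (t'.valAt w).isSome} ∧
    ∀ w, (t'.valAt w).isSome → t.valAt (φ w) = t'.valAt w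

namespace Ctx

variable {D : Type} {ar : D → ℕ} {n : ℕ}

/-- Locates position `w` of an instantiation of the context inside the subtree substituted for
a variable; `none` at positions of the context itself. -/
def source : Ctx D ar n → List ℕ → Option (Fin n × List ℕ)
  | var i, w => some (i, w)
  | node _ _, [] => none
  | node d c, k :: p => if h : k < ar d then (c ⟨k, h⟩).source p else none

theorem exists_varAt_of_source_eq_some {C : Ctx D ar n} {w v : List ℕ} {i : Fin n}
    (h : C.source w = some (i, v)) : ∃ u, C.VarAt i u ∧ w = u ++ v := by
  induction C generalizing w with
  | var j => simp_all [source, VarAt]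
  | node d c ih =>
    cases w with
    | nil => simp [source] at h
    | cons k p =>
      by_cases hk : k < ar d
      · rw [source, dif_pos hk] at h
        obtain ⟨u, hu, rfl⟩ := ih _ h
        exact ⟨k :: u, ⟨hk, hu⟩, rfl⟩
      · simp [source, hk] at h

theorem hasVar_of_varAt {C : Ctx D ar n} {i : Fin n} {u : List ℕ} (h : C.VarAt i u) :
    C.HasVar i := by
  induction C generalizing u with
  | var j => exact h.1
  | node d c ih =>
    cases u with
    | nil => exact h.elim
    | cons k p =>
      obtain ⟨hk, h⟩ := h
      exact ⟨⟨k, hk⟩, ih _ h⟩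

theorem Linear.source_injective {C : Ctx D ar n} (hC : C.Linear) {w₁ w₂ : List ℕ}
    {q : Fin n × List ℕ} (h₁ : C.source w₁ = some q) (h₂ : C.source w₂ = some q) : w₁ = w₂ := by
  obtain ⟨u₁, hu₁, rfl⟩ := exists_varAt_of_source_eq_some h₁
  obtain ⟨u₂, hu₂, rfl⟩ := exists_varAt_of_source_eq_some h₂
  rw [hC _ _ _ hu₁ hu₂]

theorem valAt_inst_of_source_eq_some {C : Ctx D ar n} {sub : Fin n → DTree D ar}
    {j : Option (List ℕ)} {ν : ℕ} {w v : List ℕ} {i : Fin n} (h : C.source w = some (i, v)) :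
    (C.inst sub j ν).valAt w = (sub i).valAt v := by
  induction C generalizing w j with
  | var j => simp_all [source, inst]
  | node d c ih =>
    cases w with
    | nil => simp [source] at h
    | cons k p =>
      by_cases hk : k < ar d
      · rw [source, dif_pos hk] at h
        simp [inst, hk, ih _ h]
      · simp [source, hk] at h

theorem valAt_inst_of_source_eq_none {C : Ctx D ar n} {sub : Fin n → DTree D ar}
    {j : Option (List ℕ)} {ν x : ℕ} {w : List ℕ} (h : C.source w = none)
    (hx : (C.inst sub j ν).valAt w = some x) : j = some w ∧ x = ν := by
  induction C generalizing w j with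
  | var j => simp [source] at h
  | node d c ih =>
    cases w with
    | nil =>
      simp only [inst, DTree.valAt_node_nil] at hx
      split_ifs at hx with hj
      exact ⟨hj, (Option.some.inj hx).symm⟩
    | cons k p =>
      by_cases hk : k < ar d
      · rw [source, dif_pos hk] at h
        simp only [inst, DTree.valAt_node_cons, dif_pos hk] at hx
        obtain ⟨hj, rfl⟩ := ih _ h hx
        refine ⟨?_, rfl⟩
        rcases j with _ | _ | ⟨m, q⟩ <;> simp only [reduceCtorEq] at hj
        split_ifs at hj with hm
        rw [hm, Option.some.inj hj]
      · simp [inst, hk] at hx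

/-- The input position from which position `w` of an instantiation of `C` takes its value,
given such maps `Φ i` for the substituted subtrees: the root for positions of `C` itself. -/
def origin (C : Ctx D ar n) (Φ : Fin n → List ℕ → List ℕ) (w : List ℕ) : List ℕ :=
  match C.source w with
  | some (i, v) => (i : ℕ) :: Φ i v
  | none => []

theorem Linear.isValueEmbedding_origin {S : Type} {arS : S → ℕ} {σ : S}
    {C : Ctx D ar (arS σ)} (hC : C.Linear) {sub : Fin (arS σ) → DTree D ar}
    {ts : Fin (arS σ) → DTree S arS} {Φ : Fin (arS σ) → List ℕ → List ℕ}
    (hΦ : ∀ i, C.HasVar i → IsValueEmbedding (Φ i) (sub i) (ts i)) (j : Option (List ℕ))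
    (ν : ℕ) : IsValueEmbedding (C.origin Φ) (C.inst sub j ν) (DTree.node σ (some ν) ts) := by
  have hvar {w v i} (h : C.source w = some (i, v)) : C.HasVar i :=
    let ⟨_, hu, _⟩ := exists_varAt_of_source_eq_some h
    hasVar_of_varAt hu
  constructor
  · intro w₁ hw₁ w₂ hw₂ he
    simp only [Set.mem_ofPred_eq, Option.isSome_iff_exists] at hw₁ hw₂
    obtain ⟨x₁, hx₁⟩ := hw₁
    obtain ⟨x₂, hx₂⟩ := hw₂
    rcases hs₁ : C.source w₁ with _ | ⟨i₁, v₁⟩ <;> rcases hs₂ : C.source w₂ with _ | ⟨i₂, v₂⟩ <;>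
      simp only [origin, hs₁, hs₂, reduceCtorEq, List.cons.injEq] at he
    · exact Option.some.inj <|
        (valAt_inst_of_source_eq_none hs₁ hx₁).1.symm.trans (valAt_inst_of_source_eq_none hs₂ hx₂).1
    · obtain ⟨hi, hΦe⟩ := he
      obtain rfl : i₁ = i₂ := Fin.ext hi
      rw [valAt_inst_of_source_eq_some hs₁] at hx₁
      rw [valAt_inst_of_source_eq_some hs₂] at hx₂
      have hv : v₁ = v₂ := (hΦ i₁ (hvar hs₁)).1 (by simp [hx₁]) (by simp [hx₂]) hΦe
      exact hC.source_injective hs₁ (hv ▸ hs₂)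
  · intro w hw
    rcases hs : C.source w with _ | ⟨i, v⟩
    · obtain ⟨x, hx⟩ := Option.isSome_iff_exists.mp hw
      obtain ⟨-, rfl⟩ := valAt_inst_of_source_eq_none hs hx
      simp [origin, hs, hx]
    · rw [valAt_inst_of_source_eq_some hs] at hw ⊢
      simpa [origin, hs] using (hΦ i (hvar hs)).2 v hw

end Ctx

namespace LinTTV

variable {S D P : Type} {arS : S → ℕ} {arD : D → ℕ} {Tr : LinTTV S arS D arD P}

theorem Deriv.exists_isValueEmbedding {p : P} {t : DTree S arS} {t' : DTree D arD}
    (h : Tr.Deriv p t t') : ∃ φ, IsValueEmbedding φ t' t := by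
  induction h with
  | step r hr ν ts sub _ ih =>
    have : ∀ i, ∃ φ, r.rhs.HasVar i → IsValueEmbedding φ (sub i) (ts i) := by
      intro i
      by_cases hi : r.rhs.HasVar i
      · exact (ih i hi).imp fun _ hφ _ => hφ
      · exact ⟨id, fun h => absurd h hi⟩
    choose Φ hΦ using this
    exact ⟨_, (Tr.wf r hr).1.isValueEmbedding_origin hΦ r.vpos ν⟩

end LinTTV

theorem detLinTTV_values_no_duplication_general {S D PT : Type} {arS : S → ℕ} {arD : D → ℕ}
    (Tr : LinTTV S arS D arD PT)
    (t : DTree S arS) (t' : DTree D arD) (h : Tr.rel t t') :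
    ∃ φ : List ℕ → List ℕ,
      Set.InjOn φ {w | (t'.valAt w).isSome} ∧
        ∀ w, (t'.valAt w).isSome → φ w ∈ t.pos ∧ t.valAt (φ w) = t'.valAt w := by
  obtain ⟨-, _, -, hd⟩ := h
  obtain ⟨φ, hinj, hval⟩ := hd.exists_isValueEmbedding
  refine ⟨φ, hinj, fun w hw => ⟨DTree.mem_pos_of_valAt_isSome ?_, hval w hw⟩⟩
  rwa [hval w hw]

/-- Let Tr be a DetLinTT^V and t ∈ dom(Tr). Then there is an injective
map φ from the value-carrying positions of Tr(t) to pos(t) with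
val(Tr(t), w) = val(t, φ(w)) for every value-carrying position w of Tr(t)
(data values are transferred from input to output without duplication). -/
theorem detLinTTV_values_no_duplication {S D PT : Type} {arS : S → ℕ} {arD : D → ℕ}
    [Fintype S] [Fintype D] [Fintype PT]
    (Tr : LinTTV S arS D arD PT) (hdet : Tr.Deterministic)
    (t : DTree S arS) (t' : DTree D arD) (h : Tr.rel t t') :
    ∃ φ : List ℕ → List ℕ,
      Set.InjOn φ {w | (t'.valAt w).isSome} ∧
        ∀ w, (t'.valAt w).isSome → φ w ∈ t.pos ∧ t.valAt (φ w) = t'.valAt w :=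
  detLinTTV_values_no_duplication_general Tr t t' h
end

section
/- A DetLinTT^V Tr (strongly) preserves an n-RQ Q if and only if (1) Tr weakly preserves Q and (2) for every t_d ∈ rng(Tr) and all t₁, t₂ ∈ Tr⁻¹(t_d), val(Q(t₁)) = val(Q(t₂)). -/
/-! If `Q'` witnesses strong preservation, every preimage `t` of `t_d` has
`val(Q(t)) = val(Q'(t_d))`; so these values are constant on preimages and their union is
`val(Q'(t_d))`. Conversely, the union of a constant family over the nonempty set of preimages
equals each of its members, so a witness of weak preservation is one of strong preservation. -/

theorem Set.biUnion_eq_of_forall_eq {α β : Type*} {s : Set α} {f : α → Set β} {c : Set β}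
    (hs : s.Nonempty) (h : ∀ a ∈ s, f a = c) : ⋃ a ∈ s, f a = c := by
  rw [← Set.biUnion_const hs c]
  exact Set.iUnion₂_congr h

theorem forall_rel_eq_iff_eq_biUnion_and_const {α β γ : Type*} (R : α → β → Prop)
    (f : α → Set γ) (g : β → Set γ) :
    (∀ a b, R a b → g b = f a) ↔
      (∀ b, (∃ a, R a b) → g b = ⋃ a ∈ {a | R a b}, f a) ∧
        ∀ b a₁ a₂, R a₁ b → R a₂ b → f a₁ = f a₂ := by
  constructor
  · intro h
    refine ⟨fun b hb => ?_, fun b a₁ a₂ h₁ h₂ => (h a₁ b h₁).symm.trans (h a₂ b h₂)⟩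
    exact (Set.biUnion_eq_of_forall_eq hb fun a ha => (h a b ha).symm).symm
  · rintro ⟨hunion, hconst⟩ a b hab
    rw [hunion b ⟨a, hab⟩]
    exact Set.biUnion_eq_of_forall_eq ⟨a, hab⟩ fun a' ha' => hconst b a' a ha' hab

theorem stronglyPreservesRel_iff {S D PQ : Type} {arS : S → ℕ} {arD : D → ℕ} {n : ℕ}
    (R : DTree S arS → DTree D arD → Prop) (Q : NRQ S arS PQ n) :
    StronglyPreservesRel R Q ↔
      WeaklyPreservesRel R Q ∧ ∀ td t₁ t₂, R t₁ td → R t₂ td → Q.valAns t₁ = Q.valAns t₂ := by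
  constructor
  · rintro ⟨P', hP', Q', hinj, hQ'⟩
    obtain ⟨hunion, hconst⟩ := (forall_rel_eq_iff_eq_biUnion_and_const R _ _).mp hQ'
    exact ⟨⟨P', hP', Q', hinj, hunion⟩, hconst⟩
  · rintro ⟨⟨P', hP', Q', hinj, hunion⟩, hconst⟩
    exact ⟨P', hP', Q', hinj, (forall_rel_eq_iff_eq_biUnion_and_const R _ _).mpr ⟨hunion, hconst⟩⟩

theorem preserves_iff_weak_and_constant_general {S D PT PQ : Type} {arS : S → ℕ} {arD : D → ℕ}
    {n : ℕ} (Tr : LinTTV S arS D arD PT) (Q : NRQ S arS PQ n) :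
    StronglyPreservesRel Tr.rel Q ↔
      WeaklyPreservesRel Tr.rel Q ∧
        ∀ td ∈ Tr.rng, ∀ t₁ ∈ Tr.preim td, ∀ t₂ ∈ Tr.preim td,
          Q.valAns t₁ = Q.valAns t₂ := by
  rw [stronglyPreservesRel_iff]
  refine and_congr_right fun _ => ⟨fun h td _ t₁ h₁ t₂ h₂ => h td t₁ t₂ h₁ h₂, ?_⟩
  exact fun h td t₁ t₂ h₁ h₂ => h td ⟨t₁, h₁⟩ t₁ h₁ t₂ h₂

/-- A DetLinTT^V Tr (strongly) preserves an n-RQ Q iff (1) Tr weakly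
preserves Q and (2) for every t_d ∈ rng(Tr) and all t₁, t₂ ∈ Tr⁻¹(t_d),
val(Q(t₁)) = val(Q(t₂)). -/
theorem preserves_iff_weak_and_constant {S D PT PQ : Type} {arS : S → ℕ} {arD : D → ℕ}
    [Fintype S] [Fintype D] [Fintype PT] [Fintype PQ] {n : ℕ}
    (Tr : LinTTV S arS D arD PT) (hdet : Tr.Deterministic)
    (Q : NRQ S arS PQ n) (hsel : ∀ s ∈ Q.sel, Function.Injective s) :
    StronglyPreservesRel Tr.rel Q ↔
      WeaklyPreservesRel Tr.rel Q ∧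
        ∀ td ∈ Tr.rng, ∀ t₁ ∈ Tr.preim td, ∀ t₂ ∈ Tr.preim td,
          Q.valAns t₁ = Q.valAns t₂ :=
  preserves_iff_weak_and_constant_general Tr Q
end

section
/- Let Tr be a DetLinTT^V and Q = (A, {p}) a 1-RQ. Suppose there exist t ∈ dom(Tr), a position ṽ ∈ pos(t), and a run m ∈ run(A, t⁻) with m(ṽ) = p, such that for every ν ∈ ℕ the data tree t^(ṽ←ν) satisfies Tr(t^(ṽ←ν)) = Tr(t). Then ⋃_{t' ∈ Tr⁻¹(Tr(t))} val(Q(t')) = ℕ. -/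
namespace DTree

variable {S : Type} {ar : S → ℕ}

theorem erase_setVal : ∀ (t : DTree S ar) (v : List ℕ) (ν : ℕ), (t.setVal v ν).erase = t.erase
  | node _ _ _, [], _ => rfl
  | node σ w c, i :: p, ν => by
      simp only [setVal, erase, node.injEq, heq_eq_eq, true_and]
      funext k
      split_ifs
      · exact erase_setVal (c k) p ν
      · rfl

theorem subtreeAt_setVal_self :
    ∀ (t : DTree S ar) (v : List ℕ) (ν : ℕ) (s : DTree S ar), t.subtreeAt v = some s →
      (t.setVal v ν).subtreeAt v = some (s.setVal [] ν)
  | node _ _ _, [], _, _, hs => by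
      cases Option.some.inj hs
      rfl
  | node σ w c, i :: p, ν, s, hs => by
      by_cases h : i < ar σ
      · simp only [subtreeAt, h, dif_pos] at hs
        simpa [setVal, subtreeAt, h] using subtreeAt_setVal_self (c ⟨i, h⟩) p ν s hs
      · simp [subtreeAt, h] at hs

theorem mem_pos_setVal_self {t : DTree S ar} {v : List ℕ} (hv : v ∈ t.pos) (ν : ℕ) :
    v ∈ (t.setVal v ν).pos := by
  obtain ⟨s, hs⟩ := Option.isSome_iff_exists.mp hv
  simp [pos, subtreeAt_setVal_self t v ν s hs]

theorem valAt_setVal_self {t : DTree S ar} {v : List ℕ} (hv : v ∈ t.pos) (ν : ℕ) :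
    (t.setVal v ν).valAt v = some ν := by
  obtain ⟨⟨σ, w, c⟩, hs⟩ := Option.isSome_iff_exists.mp hv
  simp [valAt, subtreeAt_setVal_self t v ν _ hs, setVal, rootVal]

end DTree

/-- Runs only read labels, which `setVal` leaves unchanged. -/
theorem NRQ.const_mem_valAns_setVal {S P : Type} {ar : S → ℕ} (Q : NRQ S ar P 1)
    {t : DTree S ar} {v : List ℕ} (hv : v ∈ t.pos) {m : List ℕ → P}
    (hm : Q.aut.IsRun t.erase m) (hsel : (fun _ => m v) ∈ Q.sel) (ν : ℕ) :
    (fun _ => ν) ∈ Q.valAns (t.setVal v ν) :=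
  ⟨fun _ => v,
    ⟨fun _ => DTree.mem_pos_setVal_self hv ν, m, by rwa [DTree.erase_setVal], hsel⟩,
    fun _ => DTree.valAt_setVal_self hv ν⟩

theorem deleted_query_position_union_univ_general {S D PT PQ : Type} {arS : S → ℕ}
    {arD : D → ℕ}
    (Tr : LinTTV S arS D arD PT)
    (A : TA S arS PQ) (p : PQ)
    (t : DTree S arS) (td : DTree D arD)
    (vt : List ℕ) (hv : vt ∈ t.pos)
    (m : List ℕ → PQ) (hm : A.IsRun t.erase m) (hmp : m vt = p)
    (hall : ∀ ν : ℕ, Tr.rel (t.setVal vt ν) td) :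
    ⋃ t' ∈ Tr.preim td, (NRQ.mk A {fun _ : Fin 1 => p}).valAns t' = Set.univ := by
  refine Set.eq_univ_of_forall fun ds => ?_
  have hds : ds = fun _ => ds 0 := funext fun i => congrArg ds (Subsingleton.elim i 0)
  rw [hds]
  exact Set.mem_biUnion (hall (ds 0))
    (NRQ.const_mem_valAns_setVal _ hv hm (by rw [hmp]; rfl) (ds 0))

/-- Let Tr be a DetLinTT^V and Q = (A, {p}) a 1-RQ. Suppose there are
t ∈ dom(Tr), a position vt ∈ pos(t), and a run m ∈ run(A, t⁻) with m(vt) = p, such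
that Tr(t^(vt←ν)) = Tr(t) for every ν ∈ ℕ. Then
⋃_{t' ∈ Tr⁻¹(Tr(t))} val(Q(t')) = ℕ. -/
theorem deleted_query_position_union_univ {S D PT PQ : Type} {arS : S → ℕ}
    {arD : D → ℕ} [Fintype S] [Fintype D] [Fintype PT] [Fintype PQ]
    (Tr : LinTTV S arS D arD PT) (hdet : Tr.Deterministic)
    (A : TA S arS PQ) (p : PQ)
    (t : DTree S arS) (td : DTree D arD) (htd : Tr.rel t td)
    (vt : List ℕ) (hv : vt ∈ t.pos)
    (m : List ℕ → PQ) (hm : A.IsRun t.erase m) (hmp : m vt = p)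
    (hall : ∀ ν : ℕ, Tr.rel (t.setVal vt ν) td) :
    ⋃ t' ∈ Tr.preim td, (NRQ.mk A {fun _ : Fin 1 => p}).valAns t' = Set.univ :=
  deleted_query_position_union_univ_general Tr A p t td vt hv m hm hmp hall
end

section
/- For every n-RQ Q = (A, {s}) whose selection set is a single n-tuple s of pairwise distinct states, there exists an n-RQ Q̃ = (Ã, S̃) with Q̃(t) = Q(t) for every data tree t, such that (1) there exist pairwise disjoint subsets S₁, …, S_n of the state set of Ã with S̃ = S₁ × ⋯ × S_n, and (2) for every tree t⁻ ∈ L(Ã), every accepting run m ∈ run(Ã, t⁻), and every i ∈ {1,…,n}, there exists exactly one position v ∈ pos(t) with m(v) ∈ Sᵢ. -/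
/-! The automaton `Ã` runs `A` while guessing where the `n` selected nodes are. A state of
`Ã` is a state of `A` together with two sets of variables: `here`, the variables selected at the
current node (whose `A`-state must then be `sᵢ`), and `below`, those selected at or below it.
The root has every variable below, and a variable below a node is either here or below exactly
one child, never both. So in every accepting run each variable is threaded down a single branch
to exactly one marked node. Conversely, a selection `(v₁,…,v_n)` by a run of `A` is reproduced
with `here = {k | v = v_k}` and `below = {k | v is a prefix of v_k}`. The sets
`Sᵢ = {q | i ∈ q.here ∧ q.st = sᵢ}` are disjoint because `s` is injective. -/

namespace DTree

variable {S : Type} {ar : S → ℕ}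

@[simp]
theorem subtreeAt_nil (t : DTree S ar) : t.subtreeAt [] = some t := by
  cases t; rfl

theorem subtreeAt_append (t : DTree S ar) (v w : List ℕ) :
    t.subtreeAt (v ++ w) = (t.subtreeAt v).bind (·.subtreeAt w) := by
  induction v generalizing t with
  | nil => simp
  | cons i p ih =>
    obtain ⟨σ, _, c⟩ := t
    simp only [List.cons_append, subtreeAt]
    split
    · exact ih _
    · rfl

theorem subtreeAt_erase (t : DTree S ar) (v : List ℕ) :
    t.erase.subtreeAt v = (t.subtreeAt v).map erase := by
  induction v generalizing t with
  | nil => simp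
  | cons i p ih =>
    obtain ⟨σ, _, c⟩ := t
    simp only [erase, subtreeAt]
    split
    · exact ih _
    · rfl

@[simp]
theorem pos_erase (t : DTree S ar) : t.erase.pos = t.pos := by
  ext v
  simp [pos, subtreeAt_erase]

theorem append_mem_pos {t u : DTree S ar} {v : List ℕ} (hv : t.subtreeAt v = some u)
    (x : List ℕ) : v ++ x ∈ t.pos ↔ x ∈ u.pos := by
  simp [pos, subtreeAt_append, hv]

theorem subtreeAt_append_singleton {t : DTree S ar} {v : List ℕ} {σ : S} {w : Option ℕ}
    {c : Fin (ar σ) → DTree S ar} (h : t.subtreeAt v = some (node σ w c)) (j : Fin (ar σ)) :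
    t.subtreeAt (v ++ [(j : ℕ)]) = some (c j) := by
  simp [subtreeAt_append, h, subtreeAt]

theorem cons_mem_pos_node {σ : S} {w : Option ℕ} {c : Fin (ar σ) → DTree S ar}
    {j : ℕ} {p : List ℕ} :
    j :: p ∈ (node σ w c).pos ↔ ∃ h : j < ar σ, p ∈ (c ⟨j, h⟩).pos := by
  simp only [pos, Set.mem_ofPred_eq, subtreeAt]
  split <;> simp_all

theorem mem_pos_node {σ : S} {w : Option ℕ} {c : Fin (ar σ) → DTree S ar} {x : List ℕ} :
    x ∈ (node σ w c).pos ↔ x = [] ∨ ∃ (j : Fin (ar σ)) (p : List ℕ), p ∈ (c j).pos ∧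
      x = (j : ℕ) :: p := by
  cases x with
  | nil => simp [pos, subtreeAt]
  | cons j p => simp [cons_mem_pos_node, Fin.exists_iff]

theorem prefix_iff_eq_or_exists_child {t u : DTree S ar} {v w : List ℕ}
    (hv : t.subtreeAt v = some u) (hw : w ∈ t.pos) :
    v <+: w ↔ v = w ∨ ∃ j : Fin (ar u.label), v ++ [(j : ℕ)] <+: w := by
  refine ⟨fun ⟨r, hr⟩ => ?_, ?_⟩
  · subst hr
    obtain _ | ⟨j, r⟩ := r
    · simp
    obtain ⟨σ, _, c⟩ := u
    obtain ⟨hj, -⟩ := cons_mem_pos_node.1 ((append_mem_pos hv _).1 hw)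
    exact Or.inr ⟨⟨j, hj⟩, r, by simp⟩
  · rintro (rfl | ⟨j, hj⟩)
    · exact List.prefix_rfl
    · exact (List.prefix_append v _).trans hj

end DTree

structure MarkedState (P : Type) (n : ℕ) where
  st : P
  here : Set (Fin n)
  below : Set (Fin n)
  deriving Fintype

namespace TA

variable {S P : Type} {ar : S → ℕ} {n : ℕ}

def marked (A : TA S ar P) (s : Fin n → P) : TA S ar (MarkedState P n) where
  init := {q | q.st ∈ A.init ∧ q.below = Set.univ}
  rules q σ ch :=
    A.rules q.st σ (fun j => (ch j).st) ∧ (∀ k ∈ q.here, q.st = s k) ∧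
      q.below = q.here ∪ ⋃ j, (ch j).below ∧ (∀ j, Disjoint q.here (ch j).below) ∧
      Pairwise fun j j' => Disjoint (ch j).below (ch j').below

def markSet (s : Fin n → P) (i : Fin n) : Set (MarkedState P n) :=
  {q | i ∈ q.here ∧ q.st = s i}

theorem disjoint_markSet {s : Fin n → P} (hs : Function.Injective s)
    {i j : Fin n} (hij : i ≠ j) : Disjoint (markSet s i) (markSet s j) :=
  Set.disjoint_left.2 fun _ hi hj => hij (hs (hi.2.symm.trans hj.2))

open DTree

variable {A : TA S ar P} {s : Fin n → P} {t : DTree S ar}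

theorem IsRun.of_marked {m : List ℕ → MarkedState P n} (hm : (A.marked s).IsRun t m) :
    A.IsRun t fun v => (m v).st :=
  ⟨hm.1.1, fun v u hv => (hm.2 v u hv).1⟩

theorem IsRun.marked {m : List ℕ → P} (hm : A.IsRun t m) {vs : Fin n → List ℕ}
    (hvs : ∀ i, vs i ∈ t.pos) (hsel : ∀ i, m (vs i) = s i) :
    (A.marked s).IsRun t fun v => ⟨m v, {k | v = vs k}, {k | v <+: vs k}⟩ := by
  refine ⟨⟨hm.1, ?_⟩, fun v u hv => ⟨hm.2 v u hv, ?_, ?_, ?_, ?_⟩⟩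
  · ext k
    simp
  · rintro k rfl
    exact hsel k
  · ext k
    simpa using prefix_iff_eq_or_exists_child hv (hvs k)
  · refine fun j => Set.disjoint_left.2 ?_
    rintro k rfl h
    simpa using h.length_le
  · refine fun j j' hjj' => Set.disjoint_left.2 fun k (h : _ <+: _) (h' : _ <+: _) => hjj' ?_
    have := (List.prefix_of_prefix_length_le h h' (by simp)).eq_of_length (by simp)
    simpa [Fin.ext_iff] using this

theorem IsRun.mem_below_iff {m : List ℕ → MarkedState P n} (hm : (A.marked s).IsRun t m)
    {u : DTree S ar} {v : List ℕ} (hv : t.subtreeAt v = some u)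
    (i : Fin n) : i ∈ (m v).below ↔ ∃ x ∈ u.pos, m (v ++ x) ∈ markSet s i := by
  induction u generalizing v with
  | node σ w c ih =>
    obtain ⟨-, hst, hbelow, -, -⟩ := hm.2 v _ hv
    have hhere : i ∈ (m v).here ↔ m v ∈ markSet s i := ⟨fun h => ⟨h, hst i h⟩, And.left⟩
    rw [hbelow, Set.mem_union, Set.mem_iUnion, hhere]
    simp only [label, ih _ (subtreeAt_append_singleton hv _)]
    simp [mem_pos_node]

theorem IsRun.eq_of_mem_markSet {m : List ℕ → MarkedState P n} (hm : (A.marked s).IsRun t m)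
    {u : DTree S ar} {v : List ℕ} (hv : t.subtreeAt v = some u) {i : Fin n} {x y : List ℕ}
    (hx : x ∈ u.pos) (hy : y ∈ u.pos) (hmx : m (v ++ x) ∈ markSet s i)
    (hmy : m (v ++ y) ∈ markSet s i) : x = y := by
  induction u generalizing v x y with
  | node σ w c ih =>
    obtain ⟨-, -, -, hhere, hbranch⟩ := hm.2 v _ hv
    have hchild : ∀ (j : Fin (ar σ)) p, p ∈ (c j).pos → m (v ++ ((j : ℕ) :: p)) ∈ markSet s i →
        i ∈ (m (v ++ [(j : ℕ)])).below := fun j p hp h =>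
      (hm.mem_below_iff (subtreeAt_append_singleton hv j) i).2 ⟨p, hp, by simpa using h⟩
    rcases mem_pos_node.1 hx with rfl | ⟨j, p, hp, rfl⟩ <;>
      rcases mem_pos_node.1 hy with rfl | ⟨j', p', hp', rfl⟩
    · rfl
    · exact absurd (hchild j' p' hp' hmy) (Set.disjoint_left.1 (hhere j') (by simpa using hmx.1))
    · exact absurd (hchild j p hp hmx) (Set.disjoint_left.1 (hhere j) (by simpa using hmy.1))
    · obtain rfl : j = j' := by_contra fun hjj' =>
        Set.disjoint_left.1 (hbranch hjj') (hchild j p hp hmx) (hchild j' p' hp' hmy)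
      rw [ih j (subtreeAt_append_singleton hv j) hp hp' (by simpa using hmx) (by simpa using hmy)]

theorem IsRun.existsUnique_mem_markSet {m : List ℕ → MarkedState P n}
    (hm : (A.marked s).IsRun t m) (i : Fin n) : ∃! v, v ∈ t.pos ∧ m v ∈ markSet s i := by
  have hroot : i ∈ (m []).below := hm.1.2 ▸ Set.mem_univ i
  obtain ⟨x, hx, hmx⟩ := (hm.mem_below_iff (subtreeAt_nil t) i).1 hroot
  refine ⟨x, ⟨hx, by simpa using hmx⟩, fun y ⟨hy, hmy⟩ => ?_⟩
  exact hm.eq_of_mem_markSet (subtreeAt_nil t) hy hx (by simpa using hmy) (by simpa using hmx)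

theorem ans_marked (A : TA S ar P) (s : Fin n → P) (t : DTree S ar) :
    (NRQ.mk (A.marked s) {g | ∀ i, g i ∈ markSet s i}).ans t = (NRQ.mk A {s}).ans t := by
  ext vs
  simp only [NRQ.ans, Set.mem_ofPred_eq, Set.mem_singleton_iff, funext_iff]
  refine and_congr_right fun hvs => ⟨fun ⟨m, hm, hsel⟩ => ⟨_, hm.of_marked, fun i => (hsel i).2⟩,
    fun ⟨m, hm, hsel⟩ => ⟨_, hm.marked (by simpa using hvs) hsel, fun i => ⟨rfl, hsel i⟩⟩⟩

end TA

theorem nrq_normal_form_general {S PQ : Type} {arS : S → ℕ} [Fintype PQ] {n : ℕ}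
    (A : TA S arS PQ) (s : Fin n → PQ) (hs : Function.Injective s) :
    ∃ (P' : Type) (_ : Fintype P') (A' : TA S arS P') (SS : Fin n → Set P'),
      (∀ i j, i ≠ j → Disjoint (SS i) (SS j)) ∧
      (∀ t : DTree S arS,
        (NRQ.mk A' {g | ∀ i, g i ∈ SS i}).ans t = (NRQ.mk A {s}).ans t) ∧
      (∀ (t : DTree S arS) (m : List ℕ → P'), A'.IsRun t m →
        ∀ i, ∃! v, v ∈ t.pos ∧ m v ∈ SS i) :=
  ⟨MarkedState PQ n, inferInstance, A.marked s, TA.markSet s,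
    fun _ _ => TA.disjoint_markSet hs, TA.ans_marked A s,
    fun _ _ hm => hm.existsUnique_mem_markSet⟩

/-- Lemma 2: Every n-RQ Q = (A, {s}) with s a tuple of pairwise
distinct states has an equivalent n-RQ Q̃ = (Ã, S̃) such that (1) S̃ = S₁ × ⋯ × S_n
for pairwise disjoint state sets Sᵢ, and (2) every accepting run of Ã assigns, for
each i, a state of Sᵢ to exactly one position. -/
theorem nrq_normal_form {S PQ : Type} {arS : S → ℕ} [Fintype S] [Fintype PQ] {n : ℕ}
    (A : TA S arS PQ) (s : Fin n → PQ) (hs : Function.Injective s) :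
    ∃ (P' : Type) (_ : Fintype P') (A' : TA S arS P') (SS : Fin n → Set P'),
      (∀ i j, i ≠ j → Disjoint (SS i) (SS j)) ∧
      (∀ t : DTree S arS,
        (NRQ.mk A' {g | ∀ i, g i ∈ SS i}).ans t = (NRQ.mk A {s}).ans t) ∧
      (∀ (t : DTree S arS) (m : List ℕ → P'), A'.IsRun t m →
        ∀ i, ∃! v, v ∈ t.pos ∧ m v ∈ SS i) :=
  nrq_normal_form_general A s hs
end

section
/- Let Tr be a DetLinTT^V and Q an n-RQ. If Tr (strongly) preserves Q, then every n-RQ Q' satisfying Equation (2) (i.e., val(Q'(t_d)) = ⋃_{t ∈ Tr⁻¹(t_d)} val(Q(t)) for all t_d ∈ rng(Tr)) also satisfies Equation (1) (i.e., val(Q'(Tr(t))) = val(Q(t)) for all t ∈ dom(Tr)). -/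
section Preservation

variable {S D PQ P' : Type} {arS : S → ℕ} {arD : D → ℕ} {n : ℕ}
  {R : DTree S arS → DTree D arD → Prop} {Q : NRQ S arS PQ n}

theorem StronglyPreservesRel.valAns_eq_of_rel (hpres : StronglyPreservesRel R Q)
    {t₁ t₂ : DTree S arS} {td : DTree D arD} (h₁ : R t₁ td) (h₂ : R t₂ td) :
    Q.valAns t₁ = Q.valAns t₂ := by
  obtain ⟨_, _, Q₂, -, hQ₂⟩ := hpres
  rw [← hQ₂ t₁ td h₁, hQ₂ t₂ td h₂]

theorem StronglyPreservesRel.biUnion_valAns_preimage (hpres : StronglyPreservesRel R Q)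
    {t : DTree S arS} {td : DTree D arD} (ht : R t td) :
    ⋃ u ∈ {u | R u td}, Q.valAns u = Q.valAns t :=
  subset_antisymm
    (Set.iUnion₂_subset fun _ hu => (hpres.valAns_eq_of_rel hu ht).subset)
    (Set.subset_biUnion_of_mem ht)

theorem StronglyPreservesRel.valAns_eq_of_weak_eq (hpres : StronglyPreservesRel R Q)
    {Q' : NRQ D arD P' n}
    (heq2 : ∀ td, (∃ t, R t td) → Q'.valAns td = ⋃ t ∈ {t | R t td}, Q.valAns t)
    {t : DTree S arS} {td : DTree D arD} (ht : R t td) :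
    Q'.valAns td = Q.valAns t := by
  rw [heq2 td ⟨t, ht⟩, hpres.biUnion_valAns_preimage ht]

end Preservation

theorem eq2_implies_eq1_of_preserves_general {S D PT PQ : Type} {arS : S → ℕ} {arD : D → ℕ}
    {n : ℕ} (Tr : LinTTV S arS D arD PT) (Q : NRQ S arS PQ n)
    (hpres : StronglyPreservesRel Tr.rel Q)
    (P' : Type) (Q' : NRQ D arD P' n)
    (heq2 : ∀ td ∈ Tr.rng, Q'.valAns td = ⋃ t ∈ Tr.preim td, Q.valAns t) :
    ∀ t t', Tr.rel t t' → Q'.valAns t' = Q.valAns t :=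
  fun _ _ hrel => hpres.valAns_eq_of_weak_eq heq2 hrel

/-- If Tr strongly preserves Q, then every n-RQ Q' satisfying
Equation (2) (the weak-preservation equation) also satisfies Equation (1). -/
theorem eq2_implies_eq1_of_preserves {S D PT PQ : Type} {arS : S → ℕ} {arD : D → ℕ}
    [Fintype S] [Fintype D] [Fintype PT] [Fintype PQ] {n : ℕ}
    (Tr : LinTTV S arS D arD PT) (hdet : Tr.Deterministic)
    (Q : NRQ S arS PQ n) (hsel : ∀ s ∈ Q.sel, Function.Injective s)
    (hpres : StronglyPreservesRel Tr.rel Q)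
    (P' : Type) [Fintype P'] (Q' : NRQ D arD P' n)
    (hsel' : ∀ s ∈ Q'.sel, Function.Injective s)
    (heq2 : ∀ td ∈ Tr.rng, Q'.valAns td = ⋃ t ∈ Tr.preim td, Q.valAns t) :
    ∀ t t', Tr.rel t t' → Q'.valAns t' = Q.valAns t :=
  eq2_implies_eq1_of_preserves_general Tr Q hpres P' Q' heq2
end
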